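/- For the language L = (ab)* over {a,b} and the word w = b^n a^n: every jump sequence ā with w_ā ∈ L has a_i ∈ {n+1,...,2n} for odd i ≤ 2n and a_i ∈ {1,...,n} for even i ≤ 2n, and consequently every index 1 ≤ i ≤ 2n is a turning index of ā. Hence the minimal number of turning indices over accepting jump sequences is exactly 2n. -/

import Mathlib

open scoped Classical

/-- A jump sequence for a word of length `n`: `a 0 = 0`, `a (n+1) = n+1`, and
`a` restricted to `{1,…,n}` is a permutation of `{1,…,n}`. -/
def IsJumpSeq (n : ℕ) (a : ℕ → ℕ) : Prop :=
  a 0 = 0 ∧ a (n + 1) = n + 1 ∧ Set.BijOn a (Set.Icc 1 n) (Set.Icc 1 n)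

/-- The absolute-distance cost `⟦ā⟧ = Σ_{i=1}^{n+1} (|a_i - a_{i-1}| - 1)`. -/
def absCost (n : ℕ) (a : ℕ → ℕ) : ℕ :=
  ∑ i ∈ Finset.range (n + 1), (((a (i + 1) : ℤ) - (a i : ℤ)).natAbs - 1)

/-- The maximum-jump cost `max_{i=1}^{n+1} (|a_i - a_{i-1}| - 1)`. -/
def maxCost (n : ℕ) (a : ℕ → ℕ) : ℕ :=
  (Finset.range (n + 1)).sup (fun i => ((a (i + 1) : ℤ) - (a i : ℤ)).natAbs - 1)

/-- The word `w_ā = w_{a_1} ⋯ w_{a_n}` (1-based indexing into `w`). -/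
def applyJump {α : Type*} [Inhabited α] (a : ℕ → ℕ) (w : List α) : List α :=
  (List.range w.length).map (fun i => w.getD (a (i + 1) - 1) default)

/-- `i` is a turning index of the jump sequence `a`. -/
def IsTurn (a : ℕ → ℕ) (i : ℕ) : Prop :=
  (a i > a (i - 1) ∧ a i > a (i + 1)) ∨ (a i < a (i - 1) ∧ a i < a (i + 1))

/-- The number of turning indices of `a` (among `1,…,n`). -/
noncomputable def turnCount (n : ℕ) (a : ℕ → ℕ) : ℕ :=
  ((Finset.Icc 1 n).filter (fun i => IsTurn a i)).card

/-- Hamming distance between two (equal-length) words. -/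
noncomputable def hamming {α : Type*} [Inhabited α] (w w' : List α) : ℕ :=
  ((Finset.range w.length).filter (fun i => w.getD i default ≠ w'.getD i default)).card

/-- The language `(ab)*` over `Fin 2` (`a = 0`, `b = 1`). -/
def LangABstar : Language (Fin 2) :=
  {w | ∃ m : ℕ, w = (List.replicate m ([0, 1] : List (Fin 2))).flatten}

/-! Position `i` of `w_ā` carries the letter `w_{a_i}`, which is `b` exactly when `a_i ≤ n`. Since
`(ab)*` forces the letters `a, b, a, b, …`, an accepting `ā` has `a_i > n` exactly for odd `i`;
the same holds at the endpoints `a_0 = 0` and `a_{2n+1} = 2n+1`, so every `a_i` with `1 ≤ i ≤ 2n`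
lies on the other side of `n` from both neighbours and is a turn. The zigzag
`n+1, 1, n+2, 2, …, 2n, n` is accepting. -/

lemma flatten_replicate_pair {α : Type*} (x y : α) (m : ℕ) :
    (List.replicate m [x, y]).flatten =
      (List.range (2 * m)).map (fun i => if Even i then x else y) := by
  induction m with
  | zero => simp
  | succ m ih =>
    rw [List.replicate_succ', List.flatten_append, ih, show 2 * (m + 1) = 2 * m + 1 + 1 by ring,
      List.range_succ, List.range_succ, List.map_append, List.map_append]
    simp [parity_simps]

lemma mem_langABstar_iff (w : List (Fin 2)) :
    w ∈ LangABstar ↔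
      Even w.length ∧ ∀ i (hi : i < w.length), w[i] = if Even i then 0 else 1 := by
  change (∃ m, _) ↔ _
  simp only [flatten_replicate_pair]
  constructor
  · rintro ⟨m, rfl⟩
    simp
  · rintro ⟨⟨m, hm⟩, hw⟩
    refine ⟨m, List.ext_getElem (by simp; omega) fun i h _ => ?_⟩
    simp [hw i h]

lemma length_applyJump {α : Type*} [Inhabited α] (a : ℕ → ℕ) (w : List α) :
    (applyJump a w).length = w.length := by
  simp [applyJump]

lemma getElem_applyJump {α : Type*} [Inhabited α] (a : ℕ → ℕ) (w : List α) (i : ℕ)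
    (hi : i < (applyJump a w).length) :
    (applyJump a w)[i] = w.getD (a (i + 1) - 1) default := by
  simp [applyJump]

lemma getD_replicate_append_replicate {α : Type*} (x y d : α) {n m j : ℕ} (hj : j < n + m) :
    (List.replicate n x ++ List.replicate m y).getD j d = if j < n then x else y := by
  rw [List.getD_eq_getElem _ _ (by simpa using hj)]
  by_cases h : j < n <;> simp [List.getElem_append, h]

lemma isTurn_of_alternating {a : ℕ → ℕ} {N t : ℕ} (halt : ∀ k ≤ N + 1, t < a k ↔ Odd k)
    {i : ℕ} (hi : 1 ≤ i) (hiN : i ≤ N) : IsTurn a i := by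
  have hprev := halt (i - 1) (by omega)
  have hcur := halt i (by omega)
  have hnext := halt (i + 1) (by omega)
  simp only [Nat.odd_iff] at hprev hcur hnext
  unfold IsTurn
  omega

lemma turnCount_eq_self {a : ℕ → ℕ} {N : ℕ} (h : ∀ i, 1 ≤ i → i ≤ N → IsTurn a i) :
    turnCount N a = N := by
  rw [turnCount, Finset.filter_true_of_mem fun i hi => h i (Finset.mem_Icc.1 hi).1
    (Finset.mem_Icc.1 hi).2, Nat.card_Icc, Nat.add_sub_cancel]

lemma lt_iff_odd_of_accepting {n : ℕ} {a : ℕ → ℕ} (ha : IsJumpSeq (2 * n) a)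
    (hacc : applyJump a (List.replicate n (1 : Fin 2) ++ List.replicate n 0) ∈ LangABstar) :
    ∀ k ≤ 2 * n + 1, n < a k ↔ Odd k := by
  obtain ⟨ha0, haN, hbij⟩ := ha
  intro k hk
  rcases Nat.eq_zero_or_pos k with rfl | hk0
  · simp [ha0]
  rcases hk.eq_or_lt with rfl | hkN
  · simp [haN]; omega
  have hak := hbij.mapsTo (Set.mem_Icc.2 ⟨hk0, by omega⟩)
  rw [Set.mem_Icc] at hak
  have hletter := ((mem_langABstar_iff _).1 hacc).2 (k - 1) (by simp [length_applyJump]; omega)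
  rw [getElem_applyJump, Nat.sub_add_cancel hk0,
    getD_replicate_append_replicate _ _ _ (by omega)] at hletter
  simp only [Nat.even_iff] at hletter
  rw [Nat.odd_iff]
  split_ifs at hletter <;> first | exact absurd hletter (by decide) | omega

lemma accepting_jumpSeq_spec {n : ℕ} {a : ℕ → ℕ} (ha : IsJumpSeq (2 * n) a)
    (hacc : applyJump a (List.replicate n (1 : Fin 2) ++ List.replicate n 0) ∈ LangABstar) :
    (∀ i, 1 ≤ i → i ≤ 2 * n →
      (Odd i → n + 1 ≤ a i ∧ a i ≤ 2 * n) ∧ (Even i → 1 ≤ a i ∧ a i ≤ n) ∧ IsTurn a i) ∧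
    turnCount (2 * n) a = 2 * n := by
  have halt := lt_iff_odd_of_accepting ha hacc
  have turn i (h1 : 1 ≤ i) (h2 : i ≤ 2 * n) : IsTurn a i := isTurn_of_alternating halt h1 h2
  refine ⟨fun i h1 h2 => ⟨fun hodd => ?_, fun hev => ?_, turn i h1 h2⟩, turnCount_eq_self turn⟩
  all_goals
    have hrange := Set.mem_Icc.1 (ha.2.2.mapsTo (Set.mem_Icc.2 ⟨h1, h2⟩))
    have hside := halt i (by omega)
  · exact ⟨hside.2 hodd, hrange.2⟩
  · exact ⟨hrange.1, not_lt.1 (mt hside.1 (Nat.not_odd_iff_even.2 hev))⟩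

def zigzag (n k : ℕ) : ℕ := if Even k then k / 2 else n + (k + 1) / 2

lemma isJumpSeq_zigzag (n : ℕ) : IsJumpSeq (2 * n) (zigzag n) := by
  have hmaps : Set.MapsTo (zigzag n) (Set.Icc 1 (2 * n)) (Set.Icc 1 (2 * n)) := by
    intro k hk
    simp only [Set.mem_Icc, zigzag, Nat.even_iff] at hk ⊢
    split_ifs <;> omega
  refine ⟨by simp [zigzag], ?_, ((Set.finite_Icc _ _).injOn_iff_bijOn_of_mapsTo hmaps).1 ?_⟩
  · rw [zigzag, if_neg (by simp [parity_simps])]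
    omega
  · intro x hx y hy hxy
    simp only [Set.mem_Icc, zigzag, Nat.even_iff] at hx hy hxy
    split_ifs at hxy <;> omega

lemma zigzag_accepting (n : ℕ) :
    applyJump (zigzag n) (List.replicate n (1 : Fin 2) ++ List.replicate n 0) ∈ LangABstar := by
  refine (mem_langABstar_iff _).2 ⟨by simp [length_applyJump], fun i hi => ?_⟩
  simp only [length_applyJump, List.length_append, List.length_replicate] at hi
  rw [getElem_applyJump,
    getD_replicate_append_replicate _ _ _ (by simp only [zigzag]; split_ifs <;> omega)]
  simp only [zigzag, Nat.even_iff]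
  split_ifs <;> first | rfl | omega

/-- for `w = bⁿaⁿ`, every jump sequence accepting into `(ab)*` sends
odd `i ≤ 2n` into `{n+1,…,2n}` and even `i ≤ 2n` into `{1,…,n}`, every `1 ≤ i ≤ 2n`
is a turning index, and the number of turning indices equals `2n`; moreover an
accepting jump sequence exists, so the minimum is exactly `2n`. -/
theorem abstar_rev_exact (n : ℕ) :
    (∀ a : ℕ → ℕ, IsJumpSeq (2 * n) a →
      applyJump a (List.replicate n (1 : Fin 2) ++ List.replicate n (0 : Fin 2))
        ∈ LangABstar →
      (∀ i, 1 ≤ i → i ≤ 2 * n →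
        (Odd i → n + 1 ≤ a i ∧ a i ≤ 2 * n) ∧
        (Even i → 1 ≤ a i ∧ a i ≤ n) ∧ IsTurn a i) ∧
      turnCount (2 * n) a = 2 * n) ∧
    (∃ a : ℕ → ℕ, IsJumpSeq (2 * n) a ∧
      applyJump a (List.replicate n (1 : Fin 2) ++ List.replicate n (0 : Fin 2))
        ∈ LangABstar ∧ turnCount (2 * n) a = 2 * n) := by
  exact ⟨fun _ ha hacc => accepting_jumpSeq_spec ha hacc, zigzag n, isJumpSeq_zigzag n,
    zigzag_accepting n, (accepting_jumpSeq_spec (isJumpSeq_zigzag n) (zigzag_accepting n)).2⟩
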